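/- The 4×4 Hermitian matrix Θ from the N=4 Bose-Hubbard model with β=δ=κ=0 is positive definite for all real γ with |γ| < 1/√2, and fails to be invertible at γ = 1/√2. -/

import Mathlib

open Complex Matrix ComplexOrder

noncomputable def Theta4 (γ : ℝ) : Matrix (Fin 4) (Fin 4) ℂ :=
  !![1, I * Real.sqrt 3 * γ, 0, 2 * I * γ ^ 3;
     -(I * Real.sqrt 3 * γ), ((1 + 4 * γ ^ 2 : ℝ) : ℂ), 2 * I * γ * (1 + (γ : ℂ) ^ 2), 0;
     0, -(2 * I * γ * (1 + (γ : ℂ) ^ 2)), ((1 + 4 * γ ^ 2 : ℝ) : ℂ), I * Real.sqrt 3 * γ;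
     -(2 * I * γ ^ 3), 0, -(I * Real.sqrt 3 * γ), 1]

/-!
Gaussian elimination gives an LDL* factorization `Θ = L D Lᴴ` with `L` unit lower triangular and
pivots `D = diag(1, 1 + γ², 1 - 4γ⁴, (1 - 4γ⁴)(1 - γ²)² / (1 + γ²))`. For `γ² < 1/2` every pivot is
positive, so `Θ` is congruent to a positive diagonal matrix; at `γ² = 1/2` the third pivot vanishes,
and `det Θ = det D = 0`.
-/

namespace Theta4

noncomputable def ldlLower (γ : ℝ) : Matrix (Fin 4) (Fin 4) ℂ :=
  !![1, 0, 0, 0;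
     -(I * Real.sqrt 3 * γ), 1, 0, 0;
     0, -(2 * I * γ), 1, 0;
     -(2 * I * γ ^ 3), -(2 * Real.sqrt 3 * γ ^ 4 / (1 + (γ : ℂ) ^ 2)), -(I * Real.sqrt 3 * γ), 1]

noncomputable def ldlPivot (γ : ℝ) : Fin 4 → ℝ :=
  ![1, 1 + γ ^ 2, 1 - 4 * γ ^ 4, (1 - 4 * γ ^ 4) * (1 - γ ^ 2) ^ 2 / (1 + γ ^ 2)]

theorem eq_ldlLower_mul_diagonal_mul (γ : ℝ) :
    Theta4 γ = ldlLower γ * diagonal (fun i ↦ (ldlPivot γ i : ℂ)) * (ldlLower γ)ᴴ := by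
  have hsqrt3 : ((Real.sqrt 3 : ℝ) : ℂ) ^ 2 = 3 := by norm_cast; simp
  have hne : 1 + (γ : ℂ) ^ 2 ≠ 0 := by norm_cast; positivity
  ext i j
  simp only [mul_apply, Fin.sum_univ_four, conjTranspose_apply]
  fin_cases i <;> fin_cases j <;>
    simp [Theta4, ldlLower, ldlPivot] <;> field_simp <;> ring_nf <;> simp only [I_sq, hsqrt3] <;> ring

theorem det_ldlLower (γ : ℝ) : (ldlLower γ).det = 1 := by
  rw [det_of_isLowerTriangular]
  · simp [ldlLower, Fin.prod_univ_four]
  · intro i j (hij : i < j)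
    fin_cases i <;> fin_cases j <;> simp [ldlLower] at hij ⊢

theorem det_eq_prod_ldlPivot (γ : ℝ) : (Theta4 γ).det = ∏ i, (ldlPivot γ i : ℂ) := by
  rw [eq_ldlLower_mul_diagonal_mul, det_mul, det_mul, det_conjTranspose, det_ldlLower, det_diagonal]
  simp

theorem ldlPivot_pos {γ : ℝ} (hγ : γ ^ 2 < 1 / 2) (i : Fin 4) : 0 < ldlPivot γ i := by
  have h4 : 0 < 1 - 4 * γ ^ 4 := by nlinarith [sq_nonneg γ]
  have h1 : 0 < 1 - γ ^ 2 := by linarith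
  fin_cases i <;> dsimp [ldlPivot]
  exacts [one_pos, by positivity, h4, by positivity]

theorem posDef_of_sq_lt {γ : ℝ} (hγ : γ ^ 2 < 1 / 2) : (Theta4 γ).PosDef := by
  rw [eq_ldlLower_mul_diagonal_mul]
  refine PosDef.mul_mul_conjTranspose_same ?_ (vecMul_injective_of_isUnit ?_)
  · exact posDef_diagonal_iff.mpr fun i ↦ zero_lt_real.mpr (ldlPivot_pos hγ i)
  · simp [isUnit_iff_isUnit_det, det_ldlLower]

theorem det_eq_zero_of_sq_eq {γ : ℝ} (hγ : γ ^ 2 = 1 / 2) : (Theta4 γ).det = 0 := by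
  rw [det_eq_prod_ldlPivot]
  refine Finset.prod_eq_zero (Finset.mem_univ 2) ?_
  have : γ ^ 4 = (γ ^ 2) ^ 2 := by ring
  simp [ldlPivot, this, hγ]
  norm_num

end Theta4

theorem stmt11 :
    (∀ γ : ℝ, |γ| < 1 / Real.sqrt 2 → (Theta4 γ).PosDef) ∧
    ¬ IsUnit (Theta4 (1 / Real.sqrt 2)) := by
  have sq_inv_sqrt_two : (1 / Real.sqrt 2) ^ 2 = 1 / 2 := by simp
  refine ⟨fun γ hγ ↦ Theta4.posDef_of_sq_lt ?_, fun hunit ↦ ?_⟩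
  · rw [← sq_inv_sqrt_two, ← sq_abs]
    exact pow_lt_pow_left₀ hγ (abs_nonneg γ) two_ne_zero
  · rw [isUnit_iff_isUnit_det, Theta4.det_eq_zero_of_sq_eq sq_inv_sqrt_two] at hunit
    exact not_isUnit_zero hunit
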